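/- arXiv:1102.4100 — 2 statements merged into one kernel-verified Lean document; each statement's English description precedes it below -/
import Mathlib

section
/- Let k, t, n be integers with k even and 0 < k <= 2t+1 <= n, and let f be any colouring of H_n in the class maj_t(k). Then there exists a (t+1)-geodesic P in H_n such that inst(f, P) >= 2t+1 and such that f assigns colour 0 to the last point of P. -/
open Finset

/-- The number of entries of a point of the hypercube equal to `1` (`true`). -/
def onesCount {n : ℕ} (x : Fin n → Bool) : ℕ :=
  (univ.filter fun i => x i = true).card

/-- The number of entries of a point of the hypercube equal to `0` (`false`). -/
def zerosCount {n : ℕ} (x : Fin n → Bool) : ℕ :=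
  (univ.filter fun i => x i = false).card

/-- `P` is a geodesic in the `n`-hypercube: consecutive points differ in exactly one
entry, and each of the `n` entries changes at exactly one step. -/
def IsGeodesic {n : ℕ} (P : Fin (n+1) → Fin n → Bool) : Prop :=
  ∃ σ : Equiv.Perm (Fin n), ∀ j : Fin n, ∀ ℓ : Fin n,
    P j.succ ℓ = if σ ℓ = j then !(P j.castSucc ℓ) else P j.castSucc ℓ

/-- The number of jumps of the geodesic `P` in the colouring `f`. -/
def jumps {n : ℕ} (f : (Fin n → Bool) → Bool) (P : Fin (n+1) → Fin n → Bool) : ℕ :=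
  (univ.filter fun j : Fin n => f (P j.succ) ≠ f (P j.castSucc)).card

/-- `inst f` is the maximum of `jumps f P` over all geodesics `P`. -/
noncomputable def inst {n : ℕ} (f : (Fin n → Bool) → Bool) : ℕ :=
  sSup {m | ∃ P : Fin (n+1) → Fin n → Bool, IsGeodesic P ∧ m = jumps f P}

/-- The number of `1`s among the first `k` entries of `x`. -/
def firstOnes {n : ℕ} (k : ℕ) (x : Fin n → Bool) : ℕ :=
  (univ.filter fun i : Fin n => i.val < k ∧ x i = true).card

/-- `f` belongs to the class `maj_t(k)` for even `k`: canonical on the balls, the strict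
majority colour of the first `k` entries outside the balls, and opposite colours on
points (outside the balls) whose first `k` entries are complementary. -/
def MajClass {n : ℕ} (t k : ℕ) (f : (Fin n → Bool) → Bool) : Prop :=
  (∀ x, onesCount x ≤ t → f x = false) ∧
  (∀ x, zerosCount x ≤ t → f x = true) ∧
  (∀ x, ¬ onesCount x ≤ t → ¬ zerosCount x ≤ t →
    (k < 2 * firstOnes k x → f x = true) ∧ (2 * firstOnes k x < k → f x = false)) ∧
  (∀ x y, ¬ onesCount x ≤ t → ¬ zerosCount x ≤ t → ¬ onesCount y ≤ t →
    ¬ zerosCount y ≤ t → (∀ i : Fin n, i.val < k → x i = !(y i)) → f x ≠ f y)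



lemma card_filter_val {n : ℕ} (p : ℕ → Prop) [DecidablePred p] :
    (univ.filter fun i : Fin n => p i.val).card = ((range n).filter p).card := by
  apply Finset.card_bij (fun i _ => i.val)
  · intro a ha
    simp only [mem_filter, mem_univ, true_and] at ha
    simp only [mem_filter, mem_range]
    exact ⟨a.isLt, ha⟩
  · intro a _ b _ hab; exact Fin.ext hab
  · intro b hb
    simp only [mem_filter, mem_range] at hb
    exact ⟨⟨b, hb.1⟩, by simp [hb.2], rfl⟩

lemma onesCount_add_zerosCount {n : ℕ} (x : Fin n → Bool) :
    onesCount x + zerosCount x = n := by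
  have h2 : (univ.filter fun i => x i = false) = (univ.filter fun i => ¬ x i = true) := by
    apply Finset.filter_congr; intro i _; simp
  have := Finset.card_filter_add_card_filter_not (s := (univ : Finset (Fin n)))
    (p := fun i => x i = true)
  simp only [card_univ, Fintype.card_fin] at this
  rw [onesCount, zerosCount, h2]
  exact this

section
variable {n : ℕ} (p : Fin n → Prop) [DecidablePred p] {x y : Fin n → Bool} {c : Fin n}

lemma card_flip_down (hne : ∀ ℓ, ℓ ≠ c → y ℓ = x ℓ) (hxc : x c = true) (hyc : y c = false)
    (hpc : p c) :
    (univ.filter fun i => p i ∧ y i = true).card + 1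
      = (univ.filter fun i => p i ∧ x i = true).card := by
  have hset : (univ.filter fun i => p i ∧ y i = true)
      = (univ.filter fun i => p i ∧ x i = true).erase c := by
    ext ℓ
    by_cases hl : ℓ = c
    · subst hl; simp [hyc, hxc]
    · simp [Finset.mem_erase, hl, hne ℓ hl]
  have hmem : c ∈ (univ.filter fun i => p i ∧ x i = true) := by simp [hpc, hxc]
  rw [hset, Finset.card_erase_of_mem hmem]
  have := Finset.card_pos.mpr ⟨c, hmem⟩
  omega

lemma card_flip_up (hne : ∀ ℓ, ℓ ≠ c → y ℓ = x ℓ) (hxc : x c = false) (hyc : y c = true)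
    (hpc : p c) :
    (univ.filter fun i => p i ∧ y i = true).card
      = (univ.filter fun i => p i ∧ x i = true).card + 1 := by
  have hset : (univ.filter fun i => p i ∧ y i = true)
      = insert c (univ.filter fun i => p i ∧ x i = true) := by
    ext ℓ
    by_cases hl : ℓ = c
    · subst hl; simp [hyc, hxc, hpc]
    · simp [Finset.mem_insert, hl, hne ℓ hl]
  have hmem : c ∉ (univ.filter fun i => p i ∧ x i = true) := by simp [hxc]
  rw [hset, Finset.card_insert_of_notMem hmem]

lemma card_flip_skip (hne : ∀ ℓ, ℓ ≠ c → y ℓ = x ℓ) (hpc : ¬ p c) :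
    (univ.filter fun i => p i ∧ y i = true).card
      = (univ.filter fun i => p i ∧ x i = true).card := by
  congr 1
  ext ℓ
  by_cases hl : ℓ = c
  · subst hl; simp [hpc]
  · simp [hl, hne ℓ hl]

lemma card_comp_perm (e : Equiv.Perm (Fin n)) (hp : ∀ i, p (e i) ↔ p i) (x : Fin n → Bool) :
    (univ.filter fun i => p i ∧ x (e i) = true).card
      = (univ.filter fun i => p i ∧ x i = true).card := by
  apply Finset.card_bij (fun i _ => e i)
  · intro a ha
    simp only [mem_filter, mem_univ, true_and] at ha ⊢
    exact ⟨(hp a).mpr ha.1, ha.2⟩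
  · intro a _ b _ hab; exact e.injective hab
  · intro b hb
    simp only [mem_filter, mem_univ, true_and] at hb
    refine ⟨e.symm b, ?_, by simp⟩
    simp only [mem_filter, mem_univ, true_and, e.apply_symm_apply]
    have := hp (e.symm b)
    rw [e.apply_symm_apply] at this
    exact ⟨this.mp hb.1, hb.2⟩

end

/-- step at which coordinate `ℓ` flips -/
def gfun (t h : ℕ) (ℓ : ℕ) : ℕ :=
  if ℓ + 2 ≤ h then 2*(t-h) + 2*ℓ
  else if ℓ + 1 = h then 2*t - 2
  else if ℓ = h then 2*t
  else if ℓ < 2*h then 2*ℓ + 2*t - 4*h - 1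
  else if ℓ < t + h then 2*(ℓ - 2*h)
  else if ℓ < 2*t then 2*(ℓ - (t+h)) + 1
  else if ℓ = 2*t then 2*t - 1
  else ℓ

def x0fun (t h : ℕ) (ℓ : ℕ) : Bool :=
  decide (ℓ ≤ h ∨ (2*h ≤ ℓ ∧ ℓ < t+h))

/-- coordinate flipped at step `j` -/
def cfun (t h : ℕ) (j : ℕ) : ℕ :=
  if j < 2*(t-h) then (if j % 2 = 0 then 2*h + j/2 else t + h + j/2)
  else if j < 2*t-2 then (if j % 2 = 0 then (j-2*(t-h))/2 else h + 1 + (j-2*(t-h))/2)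
  else if j = 2*t-2 then h-1
  else if j = 2*t-1 then 2*t
  else if j = 2*t then h
  else j

set_option maxHeartbeats 2000000 in
lemma gfun_lt {n t h : ℕ} (hh : 1 ≤ h) (hth : h ≤ t) (hn : 2*t+1 ≤ n) {ℓ : ℕ} (hl : ℓ < n) : gfun t h ℓ < n := by
  simp only [gfun]; split_ifs <;> omega

set_option maxHeartbeats 2000000 in
lemma gfun_inj {n t h : ℕ} (hh : 1 ≤ h) (hth : h ≤ t) (hn : 2*t+1 ≤ n) {a b : ℕ} (ha : a < n) (hb : b < n) (hab : gfun t h a = gfun t h b) :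
    a = b := by
  simp only [gfun] at hab
  split_ifs at hab <;> omega

set_option maxHeartbeats 4000000 in
lemma cfun_spec {n t h : ℕ} (hh : 1 ≤ h) (hth : h ≤ t) (hn : 2*t+1 ≤ n) {j : ℕ} (hj : j ≤ 2*t) :
    gfun t h (cfun t h j) = j ∧ cfun t h j < n
    ∧ ((x0fun t h (cfun t h j) = true) ↔ j % 2 = 0)
    ∧ (cfun t h j < 2*h ↔ ((2*(t-h) ≤ j ∧ j ≤ 2*t-2) ∨ j = 2*t)) := by
  simp only [cfun]
  split_ifs <;> (simp only [gfun, x0fun, decide_eq_true_eq]; split_ifs <;> omega)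


def QA (n t h : ℕ) (j : ℕ) : Fin n → Bool :=
  fun ℓ => if gfun t h ℓ.val < j then !(x0fun t h ℓ.val) else x0fun t h ℓ.val

def foSpec (t h j : ℕ) : ℕ :=
  if j ≤ 2*(t-h) then h+1 else if j ≤ 2*t-2 then (if j % 2 = 0 then h+1 else h)
  else if j ≤ 2*t then h else h-1

lemma filter_true_and {n : ℕ} (x : Fin n → Bool) :
    (univ.filter fun i : Fin n => (fun _ : Fin n => True) i ∧ x i = true)
      = (univ.filter fun i => x i = true) := by
  apply Finset.filter_congr; intro i _; simp

section
variable {n : ℕ} {x y : Fin n → Bool} {c : Fin n} {k : ℕ}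

lemma onesCount_flip_down (hne : ∀ ℓ, ℓ ≠ c → y ℓ = x ℓ) (hxc : x c = true)
    (hyc : y c = false) : onesCount y + 1 = onesCount x := by
  rw [onesCount, onesCount, ← filter_true_and x, ← filter_true_and y]
  exact card_flip_down _ hne hxc hyc trivial

lemma onesCount_flip_up (hne : ∀ ℓ, ℓ ≠ c → y ℓ = x ℓ) (hxc : x c = false)
    (hyc : y c = true) : onesCount y = onesCount x + 1 := by
  rw [onesCount, onesCount, ← filter_true_and x, ← filter_true_and y]
  exact card_flip_up _ hne hxc hyc trivial

lemma firstOnes_flip_down (hne : ∀ ℓ, ℓ ≠ c → y ℓ = x ℓ) (hxc : x c = true)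
    (hyc : y c = false) (hck : c.val < k) : firstOnes k y + 1 = firstOnes k x :=
  card_flip_down (fun i : Fin n => i.val < k) hne hxc hyc hck

lemma firstOnes_flip_up (hne : ∀ ℓ, ℓ ≠ c → y ℓ = x ℓ) (hxc : x c = false)
    (hyc : y c = true) (hck : c.val < k) : firstOnes k y = firstOnes k x + 1 :=
  card_flip_up (fun i : Fin n => i.val < k) hne hxc hyc hck

lemma firstOnes_flip_skip (hne : ∀ ℓ, ℓ ≠ c → y ℓ = x ℓ) (hck : ¬ c.val < k) :
    firstOnes k y = firstOnes k x :=
  card_flip_skip (fun i : Fin n => i.val < k) hne hck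

lemma onesCount_comp (e : Equiv.Perm (Fin n)) :
    onesCount (fun ℓ => x (e ℓ)) = onesCount x := by
  rw [onesCount, onesCount, ← filter_true_and x, ← filter_true_and (fun ℓ => x (e ℓ))]
  exact card_comp_perm (fun _ : Fin n => True) e (fun _ => Iff.rfl) x

lemma firstOnes_comp (e : Equiv.Perm (Fin n)) (he : ∀ i, (e i).val < k ↔ i.val < k) :
    firstOnes k (fun ℓ => x (e ℓ)) = firstOnes k x :=
  card_comp_perm (fun i : Fin n => i.val < k) e he x

end

lemma QA_zero {n t h : ℕ} : QA n t h 0 = fun ℓ => x0fun t h ℓ.val := by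
  funext ℓ; simp [QA]

lemma onesCount_x0 {n t h : ℕ} (hh : 1 ≤ h) (hth : h ≤ t) (hn : 2*t+1 ≤ n) :
    onesCount (QA n t h 0) = t + 1 := by
  rw [QA_zero, onesCount]
  rw [card_filter_val (fun m => x0fun t h m = true)]
  have : (range n).filter (fun m => x0fun t h m = true)
      = range (h+1) ∪ Ico (2*h) (t+h) := by
    ext m
    simp only [mem_filter, mem_range, mem_union, mem_Ico, x0fun, decide_eq_true_eq]
    omega
  rw [this, Finset.card_union_of_disjoint, card_range, Nat.card_Ico]
  · omega
  · simp only [Finset.disjoint_left, mem_range, mem_Ico]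
    intro a ha; omega

lemma firstOnes_x0 {n t h : ℕ} (hh : 1 ≤ h) (hth : h ≤ t) (hn : 2*t+1 ≤ n) :
    firstOnes (2*h) (QA n t h 0) = h + 1 := by
  rw [QA_zero, firstOnes]
  rw [card_filter_val (fun m => m < 2*h ∧ x0fun t h m = true)]
  have : (range n).filter (fun m => m < 2*h ∧ x0fun t h m = true) = range (h+1) := by
    ext m
    simp only [mem_filter, mem_range, x0fun, decide_eq_true_eq]
    omega
  rw [this, card_range]

lemma QA_counts {n t h : ℕ} (hh : 1 ≤ h) (hth : h ≤ t) (hn : 2*t+1 ≤ n) :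
    ∀ j, j ≤ 2*t+1 → onesCount (QA n t h j) = (if j % 2 = 0 then t+1 else t)
      ∧ firstOnes (2*h) (QA n t h j) = foSpec t h j := by
  intro j
  induction j with
  | zero =>
    intro _
    refine ⟨?_, ?_⟩
    · simp [onesCount_x0 hh hth hn]
    · rw [firstOnes_x0 hh hth hn, foSpec, if_pos (by omega)]
  | succ j ih =>
    intro hj1
    have hj : j ≤ 2*t := by omega
    obtain ⟨ho, hfo⟩ := ih (by omega)
    obtain ⟨hg, hclt, hx0, hck⟩ := cfun_spec (n := n) hh hth hn hj
    set c : Fin n := ⟨cfun t h j, hclt⟩ with hcdef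
    have hcval : c.val = cfun t h j := rfl
    have hne : ∀ ℓ : Fin n, ℓ ≠ c → QA n t h (j+1) ℓ = QA n t h j ℓ := by
      intro ℓ hl
      have hgl : gfun t h ℓ.val ≠ j := by
        intro hEq
        exact hl (Fin.ext (gfun_inj hh hth hn ℓ.isLt hclt (by rw [hEq, hg])))
      simp only [QA, show (gfun t h ℓ.val < j + 1) ↔ (gfun t h ℓ.val < j) from by omega]
    have hgc : gfun t h c.val = j := hg
    have hQc : QA n t h j c = x0fun t h c.val := by
      simp only [QA, hgc, lt_irrefl, if_false]
    have hQc1 : QA n t h (j+1) c = !(x0fun t h c.val) := by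
      simp only [QA, hgc, if_pos (Nat.lt_succ_self j)]
    by_cases hpar : j % 2 = 0
    · -- down step
      have hx : x0fun t h c.val = true := hx0.mpr hpar
      have hy : QA n t h (j+1) c = false := by rw [hQc1, hx]; rfl
      have hxx : QA n t h j c = true := by rw [hQc, hx]
      have hones : onesCount (QA n t h (j+1)) + 1 = onesCount (QA n t h j) :=
        onesCount_flip_down hne hxx hy
      constructor
      · split_ifs at * <;> omega
      · by_cases hlt : c.val < 2*h
        · have := firstOnes_flip_down hne hxx hy hlt
          rw [hcval] at hlt
          rw [hck] at hlt
          simp only [foSpec] at hfo ⊢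
          split_ifs at * <;> omega
        · have := firstOnes_flip_skip (k := 2*h) hne hlt
          rw [hcval] at hlt
          rw [hck] at hlt
          simp only [foSpec] at hfo ⊢
          split_ifs at * <;> omega
    · -- up step
      have hx : x0fun t h c.val = false := by
        cases h' : x0fun t h (cfun t h j)
        · rfl
        · exact absurd (hx0.mp h') hpar
      have hy : QA n t h (j+1) c = true := by rw [hQc1, hx]; rfl
      have hxx : QA n t h j c = false := by rw [hQc, hx]
      have hones : onesCount (QA n t h (j+1)) = onesCount (QA n t h j) + 1 :=
        onesCount_flip_up hne hxx hy
      constructor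
      · split_ifs at * <;> omega
      · by_cases hlt : c.val < 2*h
        · have := firstOnes_flip_up hne hxx hy hlt
          rw [hcval] at hlt
          rw [hck] at hlt
          simp only [foSpec] at hfo ⊢
          split_ifs at * <;> omega
        · have := firstOnes_flip_skip (k := 2*h) hne hlt
          rw [hcval] at hlt
          rw [hck] at hlt
          simp only [foSpec] at hfo ⊢
          split_ifs at * <;> omega

lemma QA_tie {n t h : ℕ} (hh : 1 ≤ h) (hth : h ≤ t) (hn : 2*t+1 ≤ n) (ℓ : Fin n)
    (hl : ℓ.val < 2*h) : QA n t h (2*t) ℓ = decide (h ≤ ℓ.val) := by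
  have hx : x0fun t h ℓ.val = decide (ℓ.val ≤ h) := by
    rw [x0fun, decide_eq_decide]; omega
  have hg' : (gfun t h ℓ.val < 2*t) ↔ ¬ (ℓ.val = h) := by
    simp only [gfun]; split_ifs <;> omega
  simp only [QA, hx]
  by_cases hc : ℓ.val = h
  · rw [if_neg (by rw [hg']; simp [hc]), decide_eq_decide]
    omega
  · rw [if_pos (hg'.mpr hc), ← decide_not, decide_eq_decide]
    omega

lemma QA_last {n t h : ℕ} (hh : 1 ≤ h) (hth : h ≤ t) (hn : 2*t+1 ≤ n) :
    QA n t h n = fun ℓ => !(x0fun t h ℓ.val) := by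
  funext ℓ
  simp only [QA, if_pos (gfun_lt hh hth hn ℓ.isLt)]

lemma onesCount_QA_last {n t h : ℕ} (hh : 1 ≤ h) (hth : h ≤ t) (hn : 2*t+1 ≤ n) :
    onesCount (QA n t h n) = n - (t+1) := by
  rw [QA_last hh hth hn, onesCount]
  rw [card_filter_val (fun m => (!(x0fun t h m)) = true)]
  have : (range n).filter (fun m => (!(x0fun t h m)) = true)
      = Ico (h+1) (2*h) ∪ Ico (t+h) n := by
    ext m
    simp only [mem_filter, mem_range, mem_union, mem_Ico, x0fun, Bool.not_eq_true',
      decide_eq_false_iff_not]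
    omega
  rw [this, Finset.card_union_of_disjoint, Nat.card_Ico, Nat.card_Ico]
  · omega
  · simp only [Finset.disjoint_left, mem_Ico]
    intro a ha; omega

lemma firstOnes_QA_last {n t h : ℕ} (hh : 1 ≤ h) (hth : h ≤ t) (hn : 2*t+1 ≤ n) :
    firstOnes (2*h) (QA n t h n) = h - 1 := by
  rw [QA_last hh hth hn, firstOnes]
  rw [card_filter_val (fun m => m < 2*h ∧ (!(x0fun t h m)) = true)]
  have : (range n).filter (fun m => m < 2*h ∧ (!(x0fun t h m)) = true) = Ico (h+1) (2*h) := by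
    ext m
    simp only [mem_filter, mem_range, mem_Ico, x0fun, Bool.not_eq_true',
      decide_eq_false_iff_not]
    omega
  rw [this, Nat.card_Ico]
  omega

lemma main_construction {n t h : ℕ} (hh : 1 ≤ h) (hth : h ≤ t) (hn : 2*t+1 ≤ n)
    (f : (Fin n → Bool) → Bool) (hf : MajClass t (2*h) f)
    (e : Equiv.Perm (Fin n)) (he : ∀ i : Fin n, (e i).val < 2*h ↔ i.val < 2*h)
    (htie : f (fun ℓ => QA n t h (2*t) (e ℓ)) = true) :
    ∃ P : Fin (n+1) → Fin n → Bool, IsGeodesic P ∧ onesCount (P 0) = t + 1 ∧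
      2*t+1 ≤ jumps f P ∧ f (P (Fin.last n)) = false := by
  obtain ⟨f0, f1, fmaj, fcomp⟩ := hf
  have colEven : ∀ m, m ≤ 2*t → m % 2 = 0 → f (fun ℓ => QA n t h m (e ℓ)) = true := by
    intro m hm hmp
    by_cases hm2 : m = 2*t
    · rw [hm2]; exact htie
    · have hones : onesCount (fun ℓ => QA n t h m (e ℓ)) = t+1 := by
        rw [onesCount_comp e, (QA_counts hh hth hn m (by omega)).1, if_pos hmp]
      have hfo : firstOnes (2*h) (fun ℓ => QA n t h m (e ℓ)) = h+1 := by
        rw [firstOnes_comp e he, (QA_counts hh hth hn m (by omega)).2]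
        simp only [foSpec]; split_ifs <;> omega
      by_cases hz : zerosCount (fun ℓ => QA n t h m (e ℓ)) ≤ t
      · exact f1 _ hz
      · exact (fmaj _ (by omega) hz).1 (by omega)
  have colOdd : ∀ m, m ≤ 2*t+1 → m % 2 = 1 → f (fun ℓ => QA n t h m (e ℓ)) = false := by
    intro m hm hmp
    have hones : onesCount (fun ℓ => QA n t h m (e ℓ)) = t := by
      rw [onesCount_comp e, (QA_counts hh hth hn m (by omega)).1, if_neg (by omega)]
    exact f0 _ (by omega)
  refine ⟨fun j ℓ => QA n t h j.val (e ℓ), ?_, ?_, ?_, ?_⟩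
  · -- geodesic
    have hbij : Function.Bijective
        (fun ℓ : Fin n => (⟨gfun t h ℓ.val, gfun_lt hh hth hn ℓ.isLt⟩ : Fin n)) := by
      refine Finite.injective_iff_bijective.mp ?_
      intro a b hab
      exact Fin.ext (gfun_inj hh hth hn a.isLt b.isLt (by simpa [Fin.ext_iff] using hab))
    refine ⟨e.trans (Equiv.ofBijective _ hbij), ?_⟩
    intro j ℓ
    have hcoe : (e.trans (Equiv.ofBijective _ hbij)) ℓ
        = (⟨gfun t h (e ℓ).val, gfun_lt hh hth hn (e ℓ).isLt⟩ : Fin n) := rfl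
    rw [hcoe]
    simp only [Fin.val_succ, Fin.coe_castSucc]
    by_cases hc : gfun t h (e ℓ).val = j.val
    · rw [if_pos (Fin.ext hc)]
      simp only [QA, hc, lt_irrefl, if_false, if_pos (Nat.lt_succ_self _)]
    · rw [if_neg (fun hEq => hc (congrArg Fin.val hEq))]
      simp only [QA,
        show (gfun t h (e ℓ).val < j.val + 1) ↔ (gfun t h (e ℓ).val < j.val) from by omega]
  · -- start
    show onesCount (fun ℓ => QA n t h (0 : Fin (n+1)).val (e ℓ)) = t + 1
    rw [show ((0 : Fin (n+1)).val) = 0 from rfl, onesCount_comp e,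
      (QA_counts hh hth hn 0 (by omega)).1]
    rfl
  · -- jumps
    have hsub : (univ.filter fun j : Fin n => j.val ≤ 2*t)
        ⊆ univ.filter (fun j : Fin n =>
            f ((fun (j : Fin (n+1)) ℓ => QA n t h j.val (e ℓ)) j.succ)
              ≠ f ((fun (j : Fin (n+1)) ℓ => QA n t h j.val (e ℓ)) j.castSucc)) := by
      intro j hj
      simp only [mem_filter, mem_univ, true_and] at hj ⊢
      simp only [Fin.val_succ, Fin.coe_castSucc]
      by_cases hp : j.val % 2 = 0
      · rw [colEven j.val hj hp, colOdd (j.val+1) (by omega) (by omega)]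
        simp
      · rw [colOdd j.val (by omega) (by omega), colEven (j.val+1) (by omega) (by omega)]
        simp
    have hcard : (univ.filter fun j : Fin n => j.val ≤ 2*t).card = 2*t+1 := by
      rw [card_filter_val (fun m => m ≤ 2*t)]
      have : (range n).filter (fun m => m ≤ 2*t) = range (2*t+1) := by
        ext m; simp only [mem_filter, mem_range]; omega
      rw [this, card_range]
    rw [jumps, ← hcard]
    exact Finset.card_le_card hsub
  · -- last point
    show f (fun ℓ => QA n t h (Fin.last n).val (e ℓ)) = false
    rw [show ((Fin.last n).val) = n from rfl]
    have hones : onesCount (fun ℓ => QA n t h n (e ℓ)) = n - (t+1) := by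
      rw [onesCount_comp e, onesCount_QA_last hh hth hn]
    by_cases hle : onesCount (fun ℓ => QA n t h n (e ℓ)) ≤ t
    · exact f0 _ hle
    · have hadd := onesCount_add_zerosCount (fun ℓ => QA n t h n (e ℓ))
      refine (fmaj _ hle (by omega)).2 ?_
      rw [firstOnes_comp e he, firstOnes_QA_last hh hth hn]
      omega

def rhoFun (n h : ℕ) (hn2 : 2*h ≤ n) : Fin n → Fin n := fun i =>
  ⟨if i.val < h then i.val + h else if i.val < 2*h then i.val - h else i.val,
    by have := i.isLt; split_ifs <;> omega⟩

lemma rhoFun_val {n h : ℕ} (hn2 : 2*h ≤ n) (i : Fin n) :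
    (rhoFun n h hn2 i).val
      = if i.val < h then i.val + h else if i.val < 2*h then i.val - h else i.val := rfl

/-- For `k` even with `0 < k ≤ 2t+1 ≤ n` and any colouring `f` in the class `maj_t(k)`,
there is a `(t+1)`-geodesic jumping at least `2t+1` times in `f` whose last point has
colour `0`. -/
theorem majClass_geq (n t k : ℕ) (heven : Even k) (hk : 0 < k) (hk2t : k ≤ 2 * t + 1)
    (hn : 2 * t + 1 ≤ n) (f : (Fin n → Bool) → Bool) (hf : MajClass t k f) :
    ∃ P : Fin (n+1) → Fin n → Bool, IsGeodesic P ∧ onesCount (P 0) = t + 1 ∧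
      2 * t + 1 ≤ jumps f P ∧ f (P (Fin.last n)) = false := by
  obtain ⟨h, hr⟩ := heven
  subst hr
  rw [show h + h = 2*h from by omega] at hf hk hk2t
  have hh : 1 ≤ h := by omega
  have hth : h ≤ t := by omega
  -- the involution swapping the two halves of the first 2h coordinates
  have hn2 : 2*h ≤ n := by omega
  have hρinv : Function.Involutive (rhoFun n h hn2) := by
    intro i; apply Fin.ext
    rw [rhoFun_val, rhoFun_val]
    have := i.isLt
    split_ifs <;> omega
  let ρ : Equiv.Perm (Fin n) := Function.Involutive.toPerm (rhoFun n h hn2) hρinv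
  have hρcoe : ∀ i, ρ i = rhoFun n h hn2 i := fun _ => rfl
  have heρ : ∀ i : Fin n, (ρ i).val < 2*h ↔ i.val < 2*h := by
    intro i
    rw [hρcoe, rhoFun_val]
    have := i.isLt
    split_ifs <;> omega
  have huo : onesCount (QA n t h (2*t)) = t + 1 := by
    rw [(QA_counts hh hth hn (2*t) (by omega)).1, if_pos (by omega)]
  have hone : f (fun ℓ => QA n t h (2*t) ((1 : Equiv.Perm (Fin n)) ℓ))
      = f (QA n t h (2*t)) := rfl
  by_cases hz : zerosCount (QA n t h (2*t)) ≤ t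
  · exact main_construction hh hth hn f hf 1 (fun i => Iff.rfl)
      (by rw [hone]; exact hf.2.1 _ hz)
  · have hcomp : ∀ i : Fin n, i.val < 2*h →
        QA n t h (2*t) i = !((fun ℓ => QA n t h (2*t) (ρ ℓ)) i) := by
      intro i hi
      have hρi : (ρ i).val < 2*h := (heρ i).mpr hi
      rw [QA_tie hh hth hn i hi]
      show _ = !(QA n t h (2*t) (ρ i))
      rw [QA_tie hh hth hn (ρ i) hρi, ← decide_not, decide_eq_decide, hρcoe, rhoFun_val]
      split_ifs <;> omega
    have hones2 : onesCount (fun ℓ => QA n t h (2*t) (ρ ℓ)) = t + 1 :=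
      (onesCount_comp ρ).trans huo
    have hadd1 := onesCount_add_zerosCount (QA n t h (2*t))
    have hadd2 := onesCount_add_zerosCount (fun ℓ => QA n t h (2*t) (ρ ℓ))
    have hneq := hf.2.2.2 (QA n t h (2*t)) (fun ℓ => QA n t h (2*t) (ρ ℓ))
      (by omega) hz (by omega) (by omega) hcomp
    by_cases hu : f (QA n t h (2*t)) = true
    · exact main_construction hh hth hn f hf 1 (fun i => Iff.rfl) (by rw [hone]; exact hu)
    · have hu2 : f (fun ℓ => QA n t h (2*t) (ρ ℓ)) = true := by
        cases hv : f (fun ℓ => QA n t h (2*t) (ρ ℓ))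
        · cases hw : f (QA n t h (2*t))
          · rw [hw, hv] at hneq; exact absurd rfl hneq
          · exact absurd hw hu
        · rfl
      exact main_construction hh hth hn f hf ρ heρ hu2
end

section
/- Let k, t, n be integers with k odd, t >= 0 and 2t+1 < k <= n. Then there is a geodesic in H_n that jumps at least k times in maj_t(k); in particular inst(maj_t(k)) >= k, so maj_t(k) has instability strictly larger than 2t+1. -/
open Finset

/-- The majority colouring `maj_t(k)` (for odd `k`): canonically `0` on `B_t(0^n)`,
`1` on `B_t(1^n)`, and elsewhere the majority colour of the first `k` entries. -/
def maj {n : ℕ} (t k : ℕ) (x : Fin n → Bool) : Bool :=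
  if onesCount x ≤ t then false
  else if zerosCount x ≤ t then true
  else decide (k < 2 * firstOnes k x)

/-! Start at the point whose ones are the odd positions below `k` and flip the coordinates
one by one in increasing order. During the first `k` steps the point has `(k - 1) / 2` or
`(k + 1) / 2` ones, all among the first `k` entries, so it stays outside both balls of radius
`t < (k - 1) / 2` and its majority colour changes at every step. -/

lemma card_filter_fin_val (n : ℕ) (p : ℕ → Prop) [DecidablePred p] :
    #{i : Fin n | p i} = #{i ∈ range n | p i} := by
  rw [card_filter, card_filter]
  exact Fin.sum_univ_eq_sum_range (fun i => if p i then 1 else 0) n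

lemma card_filter_range_mod_two_eq_one (N : ℕ) : #{i ∈ range N | i % 2 = 1} = N / 2 := by
  rw [← Nat.card_multiples N 2]
  congr 1
  ext i
  simp only [mem_filter, mem_range, Nat.dvd_iff_mod_eq_zero]
  omega

lemma card_filter_range_mod_two_eq_zero (N : ℕ) : #{i ∈ range N | i % 2 = 0} = (N + 1) / 2 := by
  have h := card_filter_add_card_filter_not (s := range N) (p := fun i => i % 2 = 0)
  simp only [Nat.mod_two_ne_zero, card_range, card_filter_range_mod_two_eq_one] at h
  omega

lemma zerosCount_add_onesCount {n : ℕ} (x : Fin n → Bool) : zerosCount x + onesCount x = n := by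
  have h := card_filter_add_card_filter_not (s := (univ : Finset (Fin n))) (p := fun i => x i = false)
  simpa [zerosCount, onesCount] using h

lemma firstOnes_eq_onesCount {n k : ℕ} {x : Fin n → Bool} (hx : ∀ i : Fin n, k ≤ i → x i = false) :
    firstOnes k x = onesCount x := by
  unfold firstOnes onesCount
  congr 1
  refine filter_congr fun i _ => ⟨And.right, fun h => ⟨?_, h⟩⟩
  by_contra! hi
  simp [hx i hi] at h

lemma jumps_le {n : ℕ} (f : (Fin n → Bool) → Bool) (P : Fin (n + 1) → Fin n → Bool) :
    jumps f P ≤ n :=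
  (card_filter_le _ _).trans_eq (card_fin n)

lemma jumps_le_inst {n : ℕ} (f : (Fin n → Bool) → Bool) {P : Fin (n + 1) → Fin n → Bool}
    (hP : IsGeodesic P) : jumps f P ≤ inst f :=
  le_csSup ⟨n, by rintro _ ⟨Q, -, rfl⟩; exact jumps_le f Q⟩ ⟨P, hP, rfl⟩

lemma le_jumps_of_forall_lt {n k : ℕ} (hkn : k ≤ n) (f : (Fin n → Bool) → Bool)
    (P : Fin (n + 1) → Fin n → Bool)
    (h : ∀ j : Fin n, (j : ℕ) < k → f (P j.succ) ≠ f (P j.castSucc)) : k ≤ jumps f P := by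
  calc k = #{j : Fin n | (j : ℕ) < k} := by rw [Fin.card_filter_val_lt, min_eq_right hkn]
    _ ≤ jumps f P := card_le_card fun j hj => by simp_all

def flipPath {n : ℕ} (x : Fin n → Bool) : Fin (n + 1) → Fin n → Bool :=
  fun j i => xor (decide ((i : ℕ) < j)) (x i)

lemma isGeodesic_flipPath {n : ℕ} (x : Fin n → Bool) : IsGeodesic (flipPath x) := by
  refine ⟨Equiv.refl _, fun j ℓ => ?_⟩
  by_cases h : ℓ = j
  · subst h
    simp [flipPath]
  · have : (ℓ : ℕ) ≠ j := Fin.val_ne_of_ne h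
    simp only [flipPath, Equiv.refl_apply, h, if_false, Fin.val_succ, Fin.val_castSucc]
    congr 1
    rw [decide_eq_decide]
    omega

def oddPrefix (n k : ℕ) : Fin n → Bool :=
  fun i => decide ((i : ℕ) % 2 = 1 ∧ (i : ℕ) < k)

lemma onesCount_flipPath_oddPrefix {n k : ℕ} (hkn : k ≤ n) {j : Fin (n + 1)} (hj : (j : ℕ) ≤ k) :
    onesCount (flipPath (oddPrefix n k) j) = k / 2 + j % 2 := by
  have hset : {i ∈ range n | xor (decide (i < (j : ℕ))) (decide (i % 2 = 1 ∧ i < k)) = true}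
      = {i ∈ range j | i % 2 = 0} ∪ ({i ∈ range k | i % 2 = 1} \ {i ∈ range j | i % 2 = 1}) := by
    ext i
    simp only [mem_filter, mem_range, mem_union, mem_sdiff, Bool.xor_iff_ne, ne_eq,
      decide_eq_decide, not_and]
    omega
  have hsub : {i ∈ range j | i % 2 = 1} ⊆ {i ∈ range k | i % 2 = 1} :=
    filter_subset_filter _ (range_subset_range.2 hj)
  have hdisj : Disjoint {i ∈ range j | i % 2 = 0}
      ({i ∈ range k | i % 2 = 1} \ {i ∈ range j | i % 2 = 1}) := by
    simp only [disjoint_left, mem_filter, mem_range, mem_sdiff, not_and]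
    omega
  have hcount : onesCount (flipPath (oddPrefix n k) j)
      = #{i ∈ range n | xor (decide (i < (j : ℕ))) (decide (i % 2 = 1 ∧ i < k)) = true} :=
    card_filter_fin_val n fun i => xor (decide (i < (j : ℕ))) (decide (i % 2 = 1 ∧ i < k)) = true
  rw [hcount, hset, card_union_of_disjoint hdisj, card_sdiff_of_subset hsub,
    card_filter_range_mod_two_eq_zero, card_filter_range_mod_two_eq_one,
    card_filter_range_mod_two_eq_one]
  omega

lemma maj_flipPath_oddPrefix {n t k : ℕ} (hodd : Odd k) (h2t : 2 * t + 1 < k) (hkn : k ≤ n)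
    {j : Fin (n + 1)} (hj : (j : ℕ) ≤ k) :
    maj t k (flipPath (oddPrefix n k) j) = decide ((j : ℕ) % 2 = 1) := by
  obtain ⟨m, rfl⟩ := hodd
  have hones := onesCount_flipPath_oddPrefix hkn hj
  have hzeros := zerosCount_add_onesCount (flipPath (oddPrefix n (2 * m + 1)) j)
  have hfirst : firstOnes (2 * m + 1) (flipPath (oddPrefix n (2 * m + 1)) j)
      = onesCount (flipPath (oddPrefix n (2 * m + 1)) j) :=
    firstOnes_eq_onesCount fun i hi => by
      have hij : ¬ (i : ℕ) < j := by omega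
      simp only [flipPath, oddPrefix, hij, decide_false, Bool.false_xor, decide_eq_false_iff_not]
      omega
  rw [maj, if_neg (by omega), if_neg (by omega), hfirst, hones, decide_eq_decide]
  omega

/-- For `k` odd with `2t+1 < k ≤ n`, there is a geodesic jumping at least `k` times in
`maj_t(k)`; in particular `inst (maj_t(k)) ≥ k > 2t+1`. -/
theorem maj_large_k (n t k : ℕ) (hodd : Odd k) (h2t : 2 * t + 1 < k) (hkn : k ≤ n) :
    (∃ P : Fin (n+1) → Fin n → Bool, IsGeodesic P ∧ k ≤ jumps (maj t k) P) ∧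
    k ≤ inst (maj (n := n) t k) ∧ 2 * t + 1 < inst (maj (n := n) t k) := by
  have hjumps : k ≤ jumps (maj t k) (flipPath (oddPrefix n k)) := by
    refine le_jumps_of_forall_lt hkn _ _ fun j hj => ?_
    rw [maj_flipPath_oddPrefix hodd h2t hkn (j := j.succ) hj,
      maj_flipPath_oddPrefix hodd h2t hkn (j := j.castSucc) hj.le]
    simp only [Fin.val_succ, Fin.val_castSucc, ne_eq, decide_eq_decide]
    omega
  have hinst := hjumps.trans (jumps_le_inst (maj t k) (isGeodesic_flipPath (oddPrefix n k)))
  exact ⟨⟨_, isGeodesic_flipPath _, hjumps⟩, hinst, h2t.trans_le hinst⟩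
end
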